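/- Let q be a rational number with 2q ∉ ℤ. Then the set of natural numbers j for which ∑_{i=0}^{j} (−1)^(j−i) · Γ^(i)(q) · Γ^(j−i)(1−q) / (i! · (j−i)!) ≠ 0 is infinite. -/

import Mathlib

/-!
By the reflection formula, `F t = Γ(x + t) Γ(1 - x - t)` equals `π / sin (π (x + t))`; for `x ∉ ℤ`
it is analytic at `0`, and by the Leibniz rule its `j`-th Taylor coefficient there is
`gammaReflectionCoeff x j`. If only finitely many of these were nonzero, `F` would agree near `0`
with a polynomial `P`, so `P t * sin (π (x + t)) = π` near `0`, hence for every `t` by the identity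
theorem, which fails at `t = -x`.
-/

open Real Filter Topology Finset
open scoped Nat

lemma Complex.analyticAt_Gamma {s : ℂ} (hs : ∀ m : ℕ, s ≠ -m) : AnalyticAt ℂ Gamma s := by
  have h := (differentiable_one_div_Gamma.analyticAt s).inv (by simpa using Gamma_ne_zero hs)
  simpa only [one_div, Pi.inv_def, inv_inv] using h

lemma Real.analyticAt_Gamma {x : ℝ} (hx : ∀ m : ℕ, x ≠ -m) : AnalyticAt ℝ Gamma x := by
  have : Gamma = fun t : ℝ ↦ (Complex.Gamma t).re := by
    ext t; rw [Complex.Gamma_ofReal, Complex.ofReal_re]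
  rw [this]
  refine AnalyticAt.re_ofReal <| Complex.analyticAt_Gamma fun m h ↦ hx m ?_
  exact_mod_cast h

lemma AnalyticAt.eventuallyEq_sum_range_of_iteratedDeriv_eq_zero {𝕜 : Type*}
    [NontriviallyNormedField 𝕜] [CompleteSpace 𝕜] [CharZero 𝕜] {f : 𝕜 → 𝕜} {x : 𝕜}
    (hf : AnalyticAt 𝕜 f x) {N : ℕ} (h : ∀ j, N < j → iteratedDeriv j f x = 0) :
    f =ᶠ[𝓝 x] fun y ↦ ∑ j ∈ range (N + 1), iteratedDeriv j f x / j ! * (y - x) ^ j := by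
  filter_upwards [hf.hasFPowerSeriesAt.eventually_hasSum_sub] with y hy
  refine hy.unique (hasSum_sum_of_ne_finset_zero fun j hj ↦ ?_) |>.trans (sum_congr rfl ?_)
  · simp [h j (by simpa using hj)]
  · intro j _
    simp [mul_comm]

lemma not_eventuallyEq_pi_div_sin {g : ℝ → ℝ} (hg : AnalyticOnNhd ℝ g Set.univ) {x : ℝ}
    (hx : sin (π * x) ≠ 0) : ¬ g =ᶠ[𝓝 0] fun t ↦ π / sin (π * (x + t)) := by
  intro hgs
  have hsin : ∀ᶠ t in 𝓝 (0 : ℝ), sin (π * (x + t)) ≠ 0 :=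
    ContinuousAt.eventually_ne (by fun_prop) (by simpa using hx)
  have hconst : (fun t ↦ g t * sin (π * (x + t))) =ᶠ[𝓝 0] fun _ ↦ π := by
    filter_upwards [hgs, hsin] with t hgt hst
    rw [hgt, div_mul_cancel₀ _ hst]
  have := congrFun ((hg.mul fun t _ ↦ by fun_prop).eq_of_eventuallyEq
    (fun _ _ ↦ analyticAt_const) hconst) (-x)
  simp only [add_neg_cancel, mul_zero, sin_zero] at this
  exact pi_ne_zero this.symm

lemma iteratedDeriv_comp_const_add_mul_comp_const_sub {𝕜 : Type*}
    [NontriviallyNormedField 𝕜] [CharZero 𝕜] {f g : 𝕜 → 𝕜} {a b : 𝕜} {j : ℕ}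
    (hf : ContDiffAt 𝕜 j f a) (hg : ContDiffAt 𝕜 j g b) :
    iteratedDeriv j (fun t ↦ f (a + t) * g (b - t)) 0 = j ! * ∑ i ∈ range (j + 1),
      (-1 : 𝕜) ^ (j - i) * iteratedDeriv i f a * iteratedDeriv (j - i) g b /
        ((i ! : 𝕜) * ((j - i)! : 𝕜)) := by
  have hf' : ContDiffAt 𝕜 j (fun t ↦ f (a + t)) 0 :=
    (by simpa using hf : ContDiffAt 𝕜 j f (a + 0)).comp _ (by fun_prop)
  have hg' : ContDiffAt 𝕜 j (fun t ↦ g (b - t)) 0 :=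
    (by simpa using hg : ContDiffAt 𝕜 j g (b - 0)).comp _ (by fun_prop)
  simp only [iteratedDeriv_fun_mul hf' hg', iteratedDeriv_comp_const_add,
    iteratedDeriv_comp_const_sub, add_zero, sub_zero, smul_eq_mul, mul_sum]
  refine sum_congr rfl fun i hi ↦ ?_
  have hij := Nat.choose_mul_factorial_mul_factorial (mem_range_succ_iff.mp hi)
  have hfact_i : (i ! : 𝕜) ≠ 0 := Nat.cast_ne_zero.mpr i.factorial_ne_zero
  have hfact_ji : ((j - i)! : 𝕜) ≠ 0 := Nat.cast_ne_zero.mpr (j - i).factorial_ne_zero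
  rw [← hij]
  push_cast
  field_simp

noncomputable def gammaReflectionCoeff (x : ℝ) (j : ℕ) : ℝ :=
  ∑ i ∈ range (j + 1), (-1 : ℝ) ^ (j - i) * iteratedDeriv i Gamma x *
    iteratedDeriv (j - i) Gamma (1 - x) / ((i ! : ℝ) * ((j - i)! : ℝ))

theorem setOf_gammaReflectionCoeff_ne_zero_infinite {x : ℝ} (hx : ∀ n : ℤ, x ≠ n) :
    {j | gammaReflectionCoeff x j ≠ 0}.Infinite := by
  intro hfin
  obtain ⟨N, hN⟩ := hfin.bddAbove
  have hΓx : AnalyticAt ℝ Gamma x := analyticAt_Gamma fun m h ↦ hx (-m) (by simpa using h)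
  have hΓ1x : AnalyticAt ℝ Gamma (1 - x) :=
    analyticAt_Gamma fun m h ↦ hx (m + 1) (by push_cast; linarith)
  set F : ℝ → ℝ := fun t ↦ Gamma (x + t) * Gamma (1 - x - t)
  have hF : AnalyticAt ℝ F 0 :=
    ((by simpa using hΓx : AnalyticAt ℝ Gamma (x + 0)).comp (by fun_prop)).mul
      ((by simpa using hΓ1x : AnalyticAt ℝ Gamma (1 - x - 0)).comp (by fun_prop))
  have hderiv (j : ℕ) : iteratedDeriv j F 0 = j ! * gammaReflectionCoeff x j :=
    iteratedDeriv_comp_const_add_mul_comp_const_sub hΓx.contDiffAt hΓ1x.contDiffAt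
  have hpoly := hF.eventuallyEq_sum_range_of_iteratedDeriv_eq_zero (N := N) fun j hj ↦ by
    rw [hderiv, not_ne_iff.mp fun h ↦ hj.not_ge (hN h), mul_zero]
  have hreflection : F = fun t ↦ π / sin (π * (x + t)) := by
    ext t; simpa [F, sub_sub] using Gamma_mul_Gamma_one_sub (x + t)
  have hsin : sin (π * x) ≠ 0 := by
    rw [mul_comm, sin_ne_zero_iff]
    intro n hn
    exact hx n (mul_right_cancel₀ pi_ne_zero hn).symm
  exact not_eventuallyEq_pi_div_sin (fun t _ ↦ by fun_prop) hsin (hreflection ▸ hpoly).symm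

/-- For rational `q` with `2q ∉ ℤ`, the Taylor coefficients of `Γ(q+t)Γ(1−q−t)`
are nonzero for infinitely many `j`. -/
theorem gamma_reflection_coeff_nonzero_infinitely_often
    (q : ℚ) (hq : ¬ ∃ k : ℤ, 2 * q = (k : ℚ)) :
    {j : ℕ | (∑ i ∈ Finset.range (j + 1),
        (-1 : ℝ) ^ (j - i) * iteratedDeriv i Real.Gamma (q : ℝ) *
          iteratedDeriv (j - i) Real.Gamma (1 - (q : ℝ)) /
            ((Nat.factorial i : ℝ) * (Nat.factorial (j - i) : ℝ))) ≠ 0}.Infinite := by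
  refine setOf_gammaReflectionCoeff_ne_zero_infinite fun n hn ↦ hq ⟨2 * n, ?_⟩
  rw [show q = n by exact_mod_cast hn]
  push_cast
  ring
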